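/- arXiv:1904.02972 — 2 statements merged into one kernel-verified Lean document; each statement's English description precedes it below -/
import Mathlib

section
/- For all integers 0 ≤ m ≤ n, the de la Vallée Poussin kernel satisfies (1/(m+1)) ∫_{−h_m}^{h_m} |Φ_{n,m}(t)| dt ≤ π·(3 + ln((n+1)/(m+1))), where Φ_{n,m}(t) := sin((m+1)t/2)·sin((2n−m+1)t/2)/(2 sin²(t/2)) and h_m := π/(m+1)^{1/2}. -/
/-!
Split `[0, π]` at `1/(n+1)` and `1/(m+1)`. Since `|sin (k x)| ≤ k |sin x|`, the kernel is bounded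
by `(m+1)(n+1)`, which handles `[0, 1/(n+1)]`. On `[1/(n+1), 1/(m+1)]`,
`|Φ_{n,m}(t)| ≤ (m+1)/(2 sin(t/2)) ≤ (m+1)π/(2t)` by Jordan's inequality, which integrates to the
logarithm. On `[1/(m+1), π]`, `|Φ_{n,m}(t)| ≤ 1/(2 sin²(t/2))`, the derivative of `-cot(t/2)`, and
`cot x ≤ 1/x` bounds this part by `2(m+1)`. As `Φ_{n,m}` is even and `h_m ≤ π`, the integral over
`[-h_m, h_m]` is at most `(m+1)(6 + π log((n+1)/(m+1)))`, and `6 ≤ 3π`.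
-/

open Real

/-- The de la Vallée Poussin kernel
`Φ_{n,m}(t) = sin((m+1)t/2)·sin((2n−m+1)t/2)/(2 sin²(t/2))`. -/
noncomputable def Phi (n m : ℕ) (t : ℝ) : ℝ :=
  Real.sin (((m : ℝ) + 1) * t / 2) * Real.sin ((2 * (n : ℝ) - m + 1) * t / 2) /
    (2 * Real.sin (t / 2) ^ 2)

open Set MeasureTheory intervalIntegral

theorem abs_sin_nat_mul_le (k : ℕ) (x : ℝ) : |sin (k * x)| ≤ k * |sin x| := by
  induction k with
  | zero => simp
  | succ k ih =>
    calc |sin ((k + 1 : ℕ) * x)| = |sin (k * x) * cos x + cos (k * x) * sin x| := by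
          rw [← sin_add]; push_cast; ring_nf
      _ ≤ |sin (k * x)| * |cos x| + |cos (k * x)| * |sin x| := by
          rw [← abs_mul, ← abs_mul]; exact abs_add_le _ _
      _ ≤ k * |sin x| * 1 + 1 * |sin x| := by
          gcongr <;> exact abs_cos_le_one _
      _ = (k + 1 : ℕ) * |sin x| := by push_cast; ring

theorem abs_sin_nat_mul_half_le (k : ℕ) (t : ℝ) : |sin (k * t / 2)| ≤ k * |sin (t / 2)| := by
  simpa only [mul_div_assoc] using abs_sin_nat_mul_le k (t / 2)

theorem div_pi_le_sin_half {t : ℝ} (h0 : 0 ≤ t) (hπ : t ≤ π) : t / π ≤ sin (t / 2) := by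
  have := mul_le_sin (x := t / 2) (by linarith) (by linarith)
  rwa [show 2 / π * (t / 2) = t / π by ring] at this

theorem cot_le_inv {x : ℝ} (h0 : 0 < x) (hx : x < π / 2) : cot x ≤ x⁻¹ := by
  have hcos : 0 < cos x := cos_pos_of_mem_Ioo ⟨by linarith, hx⟩
  have hsin : 0 < sin x := sin_pos_of_pos_of_lt_pi h0 (by linarith)
  have := lt_tan h0 hx
  rw [tan_eq_sin_div_cos, lt_div_iff₀ hcos] at this
  rw [cot_eq_cos_div_sin, div_le_iff₀ hsin, inv_mul_eq_div, le_div_iff₀ h0]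
  linarith

theorem hasDerivAt_cot {x : ℝ} (hx : sin x ≠ 0) : HasDerivAt cot (-1 / sin x ^ 2) x := by
  rw [show (cot : ℝ → ℝ) = fun y => cos y / sin y from funext cot_eq_cos_div_sin]
  refine ((hasDerivAt_cos x).div (hasDerivAt_sin x) hx).congr_deriv ?_
  rw [← sin_sq_add_cos_sq x]; ring

theorem sin_half_ne_zero_of_mem_Ioo {t : ℝ} (ht : t ∈ Ioo 0 (2 * π)) : sin (t / 2) ≠ 0 :=
  (sin_pos_of_pos_of_lt_pi (by linarith [ht.1]) (by linarith [ht.2])).ne'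

theorem continuousOn_inv_two_mul_sin_half_sq :
    ContinuousOn (fun t => 1 / (2 * sin (t / 2) ^ 2)) (Ioo 0 (2 * π)) :=
  continuousOn_const.div (by fun_prop) fun t ht => by simpa using sin_half_ne_zero_of_mem_Ioo ht

theorem integral_inv_two_mul_sin_half_sq {a b : ℝ} (ha : 0 < a) (hab : a ≤ b) (hb : b < 2 * π) :
    ∫ t in a..b, 1 / (2 * sin (t / 2) ^ 2) = cot (a / 2) - cot (b / 2) := by
  have hsub : uIcc a b ⊆ Ioo 0 (2 * π) := by
    rw [uIcc_of_le hab]; exact Icc_subset_Ioo ha hb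
  have hsin : ∀ t ∈ uIcc a b, sin (t / 2) ≠ 0 := fun t ht => sin_half_ne_zero_of_mem_Ioo (hsub ht)
  have hderiv : ∀ t ∈ uIcc a b,
      HasDerivAt (fun s => -cot (s / 2)) (1 / (2 * sin (t / 2) ^ 2)) t := by
    intro t ht
    refine ((hasDerivAt_cot (hsin t ht)).comp t ((hasDerivAt_id t).div_const 2)).neg.congr_deriv ?_
    ring
  rw [integral_eq_sub_of_hasDerivAt hderiv
    (continuousOn_inv_two_mul_sin_half_sq.mono hsub).intervalIntegrable]
  ring

theorem Phi_neg (n m : ℕ) (t : ℝ) : Phi n m (-t) = Phi n m t := by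
  simp only [Phi, mul_neg, neg_div, sin_neg, neg_mul, neg_neg, neg_sq]

-- With `x / 0 = 0` the kernel is `0`, not its limit value, where `sin (t / 2)` vanishes.
theorem Phi_of_sin_half_eq_zero (n m : ℕ) {t : ℝ} (ht : sin (t / 2) = 0) : Phi n m t = 0 := by
  simp [Phi, ht]

theorem abs_Phi (n m : ℕ) (t : ℝ) :
    |Phi n m t| = |sin ((m + 1) * t / 2)| * |sin ((2 * n - m + 1) * t / 2)| /
      (2 * sin (t / 2) ^ 2) := by
  rw [Phi, abs_div, abs_mul, abs_of_nonneg (by positivity : (0 : ℝ) ≤ 2 * sin (t / 2) ^ 2)]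

theorem abs_Phi_le_mul {n m : ℕ} (hmn : m ≤ n) (t : ℝ) : |Phi n m t| ≤ (m + 1) * (n + 1) := by
  rcases eq_or_ne (sin (t / 2)) 0 with hs | hs
  · rw [Phi_of_sin_half_eq_zero n m hs, abs_zero]; positivity
  have h₁ : |sin ((m + 1) * t / 2)| ≤ (m + 1) * |sin (t / 2)| := by
    exact_mod_cast abs_sin_nat_mul_half_le (m + 1) t
  have h₂ : |sin ((2 * n - m + 1) * t / 2)| ≤ (2 * n - m + 1) * |sin (t / 2)| := by
    have := abs_sin_nat_mul_half_le (2 * n - m + 1) t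
    rwa [Nat.cast_add, Nat.cast_sub (by omega), Nat.cast_mul, Nat.cast_ofNat, Nat.cast_one] at this
  calc |Phi n m t|
      ≤ (m + 1) * |sin (t / 2)| * ((2 * n - m + 1) * |sin (t / 2)|) / (2 * sin (t / 2) ^ 2) := by
        rw [abs_Phi]; gcongr
    _ = (m + 1) * ((2 * n - m + 1) / 2) := by
        rw [← sq_abs (sin _)]; field_simp
    _ ≤ (m + 1) * (n + 1) := by
        gcongr; linarith [(m.cast_nonneg : (0 : ℝ) ≤ m)]

theorem abs_Phi_le_div_abs_sin (n m : ℕ) (t : ℝ) :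
    |Phi n m t| ≤ (m + 1) / (2 * |sin (t / 2)|) := by
  rcases eq_or_ne (sin (t / 2)) 0 with hs | hs
  · rw [Phi_of_sin_half_eq_zero n m hs, abs_zero]; positivity
  calc |Phi n m t| ≤ (m + 1) * |sin (t / 2)| * 1 / (2 * sin (t / 2) ^ 2) := by
        rw [abs_Phi]; gcongr
        · exact_mod_cast abs_sin_nat_mul_half_le (m + 1) t
        · exact abs_sin_le_one _
    _ = (m + 1) / (2 * |sin (t / 2)|) := by
        rw [← sq_abs (sin _)]; field_simp

theorem abs_Phi_le_inv_two_mul_sin_half_sq (n m : ℕ) (t : ℝ) :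
    |Phi n m t| ≤ 1 / (2 * sin (t / 2) ^ 2) := by
  rw [abs_Phi]
  gcongr
  exact mul_le_one₀ (abs_sin_le_one _) (abs_nonneg _) (abs_sin_le_one _)

theorem abs_Phi_le_mul_inv (n m : ℕ) {t : ℝ} (h0 : 0 < t) (hπ : t ≤ π) :
    |Phi n m t| ≤ (m + 1) * π / 2 * t⁻¹ := by
  have hsin : t / π ≤ |sin (t / 2)| := (div_pi_le_sin_half h0.le hπ).trans (le_abs_self _)
  have : 0 < t / π := div_pos h0 pi_pos
  calc |Phi n m t| ≤ (m + 1) / (2 * |sin (t / 2)|) := abs_Phi_le_div_abs_sin n m t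
    _ ≤ (m + 1) / (2 * (t / π)) := by gcongr
    _ = (m + 1) * π / 2 * t⁻¹ := by field_simp

theorem measurable_Phi (n m : ℕ) : Measurable (Phi n m) := by
  unfold Phi; fun_prop

theorem intervalIntegrable_abs_Phi {n m : ℕ} (hmn : m ≤ n) (a b : ℝ) :
    IntervalIntegrable (fun t => |Phi n m t|) volume a b :=
  (intervalIntegrable_const (c := ((m : ℝ) + 1) * (n + 1))).mono_fun'
    (measurable_Phi n m).abs.aestronglyMeasurable
    (ae_of_all _ fun t => by simpa using abs_Phi_le_mul hmn t)

theorem integral_abs_Phi_near_zero_le {n m : ℕ} (hmn : m ≤ n) :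
    ∫ t in (0)..((n : ℝ) + 1)⁻¹, |Phi n m t| ≤ m + 1 := by
  have hn : (0 : ℝ) < n + 1 := by positivity
  calc ∫ t in (0)..((n : ℝ) + 1)⁻¹, |Phi n m t|
      ≤ ‖∫ t in (0)..((n : ℝ) + 1)⁻¹, |Phi n m t|‖ := le_abs_self _
    _ ≤ (m + 1) * (n + 1) * |((n : ℝ) + 1)⁻¹ - 0| :=
        norm_integral_le_of_norm_le_const fun t _ => by simpa using abs_Phi_le_mul hmn t
    _ = m + 1 := by
        rw [sub_zero, abs_of_pos (inv_pos.2 hn)]; field_simp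

theorem integral_abs_Phi_middle_le {n m : ℕ} (hmn : m ≤ n) :
    ∫ t in ((n : ℝ) + 1)⁻¹..((m : ℝ) + 1)⁻¹, |Phi n m t| ≤
      (m + 1) * π / 2 * log ((n + 1) / (m + 1)) := by
  have hm : (0 : ℝ) < m + 1 := by positivity
  have hn : (0 : ℝ) < n + 1 := by positivity
  have hle : ((n : ℝ) + 1)⁻¹ ≤ ((m : ℝ) + 1)⁻¹ := inv_anti₀ hm (by gcongr)
  have hπ : ((m : ℝ) + 1)⁻¹ ≤ π :=
    (inv_le_one_of_one_le₀ (by linarith)).trans (by linarith [pi_gt_three])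
  have hpos : ∀ t ∈ uIcc ((n : ℝ) + 1)⁻¹ ((m : ℝ) + 1)⁻¹, 0 < t := by
    rw [uIcc_of_le hle]; exact fun t ht => (inv_pos.2 hn).trans_le ht.1
  calc ∫ t in ((n : ℝ) + 1)⁻¹..((m : ℝ) + 1)⁻¹, |Phi n m t|
      ≤ ∫ t in ((n : ℝ) + 1)⁻¹..((m : ℝ) + 1)⁻¹, (m + 1) * π / 2 * t⁻¹ :=
        integral_mono_on hle (intervalIntegrable_abs_Phi hmn _ _)
          ((intervalIntegrable_inv (fun t ht => (hpos t ht).ne') continuousOn_id).const_mul _)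
          fun t ht => abs_Phi_le_mul_inv n m (hpos t (Icc_subset_uIcc ht)) (ht.2.trans hπ)
    _ = (m + 1) * π / 2 * log ((n + 1) / (m + 1)) := by
        rw [intervalIntegral.integral_const_mul, integral_inv_of_pos (inv_pos.2 hn) (inv_pos.2 hm),
          inv_div_inv]

theorem integral_abs_Phi_tail_le {n m : ℕ} (hmn : m ≤ n) :
    ∫ t in ((m : ℝ) + 1)⁻¹..π, |Phi n m t| ≤ 2 * (m + 1) := by
  have hm : (0 : ℝ) < m + 1 := by positivity
  have hδ : ((m : ℝ) + 1)⁻¹ ≤ 1 := inv_le_one_of_one_le₀ (by linarith)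
  have hδπ : ((m : ℝ) + 1)⁻¹ ≤ π := hδ.trans (by linarith [pi_gt_three])
  calc ∫ t in ((m : ℝ) + 1)⁻¹..π, |Phi n m t|
      ≤ ∫ t in ((m : ℝ) + 1)⁻¹..π, 1 / (2 * sin (t / 2) ^ 2) :=
        integral_mono_on hδπ (intervalIntegrable_abs_Phi hmn _ _)
          (ContinuousOn.intervalIntegrable_of_Icc hδπ (continuousOn_inv_two_mul_sin_half_sq.mono
            (Icc_subset_Ioo (inv_pos.2 hm) (by linarith [pi_pos]))))
          fun t _ => abs_Phi_le_inv_two_mul_sin_half_sq n m t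
    _ = cot (((m : ℝ) + 1)⁻¹ / 2) := by
        rw [integral_inv_two_mul_sin_half_sq (inv_pos.2 hm) hδπ (by linarith [pi_pos]),
          cot_eq_cos_div_sin (π / 2), cos_pi_div_two, zero_div, sub_zero]
    _ ≤ (((m : ℝ) + 1)⁻¹ / 2)⁻¹ :=
        cot_le_inv (by positivity) (by linarith [pi_gt_three])
    _ = 2 * (m + 1) := by field_simp

theorem integral_neg_pi_pi_abs_Phi_le {n m : ℕ} (hmn : m ≤ n) :
    ∫ t in (-π)..π, |Phi n m t| ≤ (m + 1) * (6 + π * log ((n + 1) / (m + 1))) := by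
  have hI := intervalIntegrable_abs_Phi hmn
  have heven : ∫ t in (-π)..0, |Phi n m t| = ∫ t in (0)..π, |Phi n m t| := by
    simpa [Phi_neg] using (integral_comp_neg (a := 0) (b := π) fun t => |Phi n m t|).symm
  rw [← integral_add_adjacent_intervals (hI (-π) 0) (hI 0 π), heven,
    ← integral_add_adjacent_intervals (hI 0 ((n : ℝ) + 1)⁻¹) (hI _ π),
    ← integral_add_adjacent_intervals (hI _ ((m : ℝ) + 1)⁻¹) (hI _ π)]
  linarith [integral_abs_Phi_near_zero_le hmn, integral_abs_Phi_middle_le hmn,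
    integral_abs_Phi_tail_le hmn]

/-- `(1/(m+1)) ∫_{−h_m}^{h_m} |Φ_{n,m}(t)| dt ≤ π(3 + ln((n+1)/(m+1)))`
with `h_m = π/(m+1)^{1/2}`. -/
theorem vdlP_kernel_integral_bound (m n : ℕ) (hmn : m ≤ n) :
    (1 / ((m : ℝ) + 1)) *
        ∫ t in (-(π / ((m : ℝ) + 1) ^ ((1 : ℝ) / 2)))..(π / ((m : ℝ) + 1) ^ ((1 : ℝ) / 2)),
          |Phi n m t| ≤
      π * (3 + Real.log (((n : ℝ) + 1) / ((m : ℝ) + 1))) := by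
  have hm : (0 : ℝ) < m + 1 := by positivity
  have hh : π / ((m : ℝ) + 1) ^ ((1 : ℝ) / 2) ≤ π :=
    div_le_self pi_pos.le (one_le_rpow (by linarith) (by norm_num))
  have hh0 : 0 ≤ π / ((m : ℝ) + 1) ^ ((1 : ℝ) / 2) := by positivity
  calc (1 / ((m : ℝ) + 1)) *
        ∫ t in (-(π / ((m : ℝ) + 1) ^ ((1 : ℝ) / 2)))..(π / ((m : ℝ) + 1) ^ ((1 : ℝ) / 2)),
          |Phi n m t|
      ≤ (1 / ((m : ℝ) + 1)) * ∫ t in (-π)..π, |Phi n m t| := by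
        gcongr
        exact integral_mono_interval (by linarith) (by linarith) hh
          (ae_of_all _ fun _ => abs_nonneg _) (intervalIntegrable_abs_Phi hmn _ _)
    _ ≤ (1 / ((m : ℝ) + 1)) * ((m + 1) * (6 + π * log ((n + 1) / (m + 1)))) := by
        gcongr; exact integral_neg_pi_pi_abs_Phi_le hmn
    _ ≤ π * (3 + Real.log (((n : ℝ) + 1) / ((m : ℝ) + 1))) := by
        rw [← mul_assoc, one_div_mul_cancel hm.ne', one_mul]
        linarith [pi_gt_three]
end

section
/- For all integers 0 ≤ m ≤ n and all real t with π/(m+1)^{1/2} ≤ |t| ≤ π, the normalized de la Vallée Poussin kernel satisfies (1/(m+1))·|Φ_{n,m}(t)| ≤ 1/2 (so the kernel family satisfies condition C) with γ = 1/2). -/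
open Real

/-- Condition C) for the de la Vallée Poussin kernels (with `γ = 1/2`):
for `π/(m+1)^{1/2} ≤ |t| ≤ π`, `(1/(m+1))·|Φ_{n,m}(t)| ≤ 1/2`. -/
theorem vdlP_kernel_tail_bound (m n : ℕ) (hmn : m ≤ n) (t : ℝ)
    (ht₁ : π / ((m : ℝ) + 1) ^ ((1 : ℝ) / 2) ≤ |t|) (ht₂ : |t| ≤ π) :
    (1 / ((m : ℝ) + 1)) * |Phi n m t| ≤ 1 / 2 := by
  have hm1 : (0:ℝ) < (m : ℝ) + 1 := by positivity
  have hrt : (0:ℝ) < ((m : ℝ) + 1) ^ ((1:ℝ)/2) := by positivity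
  have ht0 : 0 < |t| := lt_of_lt_of_le (by positivity) ht₁
  -- sin(|t|/2) ≥ |t|/π ≥ 1/√(m+1)
  have hjordan : |t| / π ≤ Real.sin (|t| / 2) := by
    simpa using Real.mul_le_sin (x := |t| / 2) (by positivity) (by linarith)
  have h1 : (1:ℝ) / ((m : ℝ) + 1) ^ ((1:ℝ)/2) ≤ |t| / π := by
    rw [div_le_div_iff₀ hrt Real.pi_pos]
    have := (div_le_iff₀ hrt).mp ht₁
    linarith
  have hsin : (1:ℝ) / ((m : ℝ) + 1) ^ ((1:ℝ)/2) ≤ Real.sin (|t| / 2) := h1.trans hjordan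
  have hsq : (1:ℝ) / ((m : ℝ) + 1) ≤ Real.sin (t / 2) ^ 2 := by
    have habs : Real.sin (t / 2) ^ 2 = Real.sin (|t| / 2) ^ 2 := by
      rcases abs_cases t with ⟨h, _⟩ | ⟨h, _⟩
      · rw [h]
      · rw [h, neg_div, Real.sin_neg]; ring
    rw [habs]
    calc (1:ℝ) / ((m : ℝ) + 1)
        = ((1:ℝ) / ((m : ℝ) + 1) ^ ((1:ℝ)/2)) ^ 2 := by
          rw [div_pow, one_pow, ← Real.rpow_natCast (((m:ℝ)+1) ^ ((1:ℝ)/2)) 2,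
            ← Real.rpow_mul hm1.le]
          norm_num
      _ ≤ Real.sin (|t| / 2) ^ 2 := by
          apply pow_le_pow_left₀ (by positivity) hsin
  have hsq0 : 0 < Real.sin (t / 2) ^ 2 := lt_of_lt_of_le (by positivity) hsq
  have hnum : |Real.sin (((m : ℝ) + 1) * t / 2) * Real.sin ((2 * (n : ℝ) - m + 1) * t / 2)| ≤ 1 := by
    rw [abs_mul]
    calc |Real.sin (((m : ℝ) + 1) * t / 2)| * |Real.sin ((2 * (n : ℝ) - m + 1) * t / 2)|
        ≤ 1 * 1 := mul_le_mul (Real.abs_sin_le_one _) (Real.abs_sin_le_one _)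
            (abs_nonneg _) zero_le_one
      _ = 1 := one_mul 1
  have hPhi : |Phi n m t| ≤ ((m : ℝ) + 1) / 2 := by
    rw [Phi, abs_div]
    rw [abs_of_pos (by positivity : (0:ℝ) < 2 * Real.sin (t/2)^2)]
    rw [div_le_div_iff₀ (by positivity) (by norm_num)]
    calc |Real.sin (((m : ℝ) + 1) * t / 2) * Real.sin ((2 * (n : ℝ) - m + 1) * t / 2)| * 2
        ≤ 1 * 2 := by linarith
      _ = 2 := one_mul 2
      _ ≤ ((m : ℝ) + 1) * (2 * Real.sin (t/2)^2) := by
          have h2 : (1:ℝ) ≤ Real.sin (t/2)^2 * ((m:ℝ)+1) := (div_le_iff₀ hm1).mp hsq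
          nlinarith
  rw [div_mul_eq_mul_div, one_mul, div_le_div_iff₀ hm1 (by norm_num)]
  linarith
end
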